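/- arXiv:2112.11901 — 2 statements merged into one kernel-verified Lean document; each statement's English description precedes it below -/
import Mathlib

section
/- Failure of the triangle inequality for the bottleneck dissimilarity (Example 4.2). For each integer k ≥ 1, let C_k be the 2-dimensional signed barcode ({(m/k, 1−m/k) : 0 ≤ m ≤ k}, {((m+1)/k, 1−m/k) : 0 ≤ m ≤ k−1}) (both components taken as multisets), and let B = ({(0,1)}, ∅) and D = ({(1,0)}, ∅). Then d̂_B(B, C_k) ≤ 1/k and d̂_B(C_k, D) ≤ 1/k, while d̂_B(B, D) = 1. Consequently, the bottleneck dissimilarity d̂_B on finite 2-dimensional signed barcodes does not satisfy the triangle inequality. -/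
set_option linter.unusedVariables false
set_option maxHeartbeats 800000

open scoped Classical ENNReal

noncomputable section

/-- Points of `R^n`. The metric on `Fin n → ℝ` is the sup-metric, so `dist` is `‖·‖_∞`. -/
abbrev Pt (n : ℕ) := Fin n → ℝ

/-- An `n`-parameter persistence module: a functor from the poset `R^n`
to finite-dimensional `k`-vector spaces. -/
structure PersMod (k : Type) [Field k] (n : ℕ) where
  X : Pt n → Type
  [acg : ∀ r, AddCommGroup (X r)]
  [mod : ∀ r, Module k (X r)]
  [fd : ∀ r, FiniteDimensional k (X r)]
  map : ∀ {r s : Pt n}, r ≤ s → (X r →ₗ[k] X s)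
  map_id : ∀ r : Pt n, map (le_refl r) = LinearMap.id
  map_comp : ∀ {r s t : Pt n} (h₁ : r ≤ s) (h₂ : s ≤ t),
    (map h₂).comp (map h₁) = map (h₁.trans h₂)

attribute [instance] PersMod.acg PersMod.mod PersMod.fd

variable {k : Type} [Field k] {n : ℕ}

/-- A morphism of persistence modules: a natural transformation. -/
structure PersHom (M N : PersMod k n) where
  app : ∀ r, M.X r →ₗ[k] N.X r
  natural : ∀ {r s : Pt n} (h : r ≤ s),
    (N.map h).comp (app r) = (app s).comp (M.map h)

def shiftPt (ε : ℝ) (r : Pt n) : Pt n := fun i => r i + ε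

lemma shiftPt_mono {ε : ℝ} {r s : Pt n} (h : r ≤ s) : shiftPt ε r ≤ shiftPt ε s :=
  fun i => by show r i + ε ≤ s i + ε; linarith [h i]

lemma le_shiftPt {ε : ℝ} (hε : 0 ≤ ε) (r : Pt n) : r ≤ shiftPt ε r :=
  fun i => le_add_of_nonneg_right hε

/-- The `ε`-shift of a persistence module. -/
def PersMod.shift (M : PersMod k n) (ε : ℝ) : PersMod k n where
  X r := M.X (shiftPt ε r)
  map h := M.map (shiftPt_mono h)
  map_id r := M.map_id _
  map_comp h₁ h₂ := M.map_comp _ _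

/-- `M` and `N` are `ε`-interleaved. -/
def Interleaved (ε : ℝ) (M N : PersMod k n) : Prop :=
  ∃ hε : 0 ≤ ε,
  ∃ (f : PersHom M (N.shift ε)) (g : PersHom N (M.shift ε)),
    (∀ r : Pt n, (g.app (shiftPt ε r)).comp (f.app r)
        = M.map ((le_shiftPt hε r).trans (le_shiftPt hε _))) ∧
    (∀ r : Pt n, (f.app (shiftPt ε r)).comp (g.app r)
        = N.map ((le_shiftPt hε r).trans (le_shiftPt hε _)))

/-- The interleaving distance. -/
def interleavingDist (M N : PersMod k n) : ℝ≥0∞ :=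
  sInf { e : ℝ≥0∞ | ∃ ε : ℝ, e = ENNReal.ofReal ε ∧ Interleaved ε M N }

/-- The free persistence module `⊕_i F_{L i}`, where `F_j` is the "upset" interval module
generated at `j`. -/
def freeModFin {m : ℕ} (L : Fin m → Pt n) : PersMod k n where
  X r := {i : Fin m // L i ≤ r} → k
  map {r s} h :=
    { toFun := fun f i => if h' : L i.1 ≤ r then f ⟨i.1, h'⟩ else 0
      map_add' := by
        intro f g; funext i
        by_cases h' : L i.1 ≤ r <;> simp [h']
      map_smul' := by
        intro c f; funext i
        by_cases h' : L i.1 ≤ r <;> simp [h'] }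
  map_id r := by
    apply LinearMap.ext; intro f; funext i
    show (if h' : L i.1 ≤ r then f ⟨i.1, h'⟩ else 0) = f i
    rw [dif_pos i.2]
  map_comp {r s t} h₁ h₂ := by
    apply LinearMap.ext; intro f; funext i
    show (if hs : L i.1 ≤ s then
            (if hr : L i.1 ≤ r then f ⟨i.1, hr⟩ else 0) else 0)
        = (if hr : L i.1 ≤ r then f ⟨i.1, hr⟩ else 0)
    by_cases hr : L i.1 ≤ r
    · simp [hr, hr.trans h₁]
    · simp [hr]

/-- Isomorphism of persistence modules. -/
def PersIso (M N : PersMod k n) : Prop :=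
  ∃ (f : PersHom M N) (g : PersHom N M),
    (∀ r, (g.app r).comp (f.app r) = LinearMap.id) ∧
    (∀ r, (f.app r).comp (g.app r) = LinearMap.id)

/-- `P` is free of finite rank with barcode `B`. -/
def IsFreeWith (P : PersMod k n) (B : Multiset (Pt n)) : Prop :=
  ∃ (m : ℕ) (L : Fin m → Pt n), B = (List.ofFn L : Multiset (Pt n)) ∧ PersIso P (freeModFin L)

/-- `M` is finitely presentable: it is (isomorphic to) the cokernel of a morphism
between free modules of finite rank. -/
def FinitelyPresentable (M : PersMod k n) : Prop :=
  ∃ (c r : ℕ) (Lc : Fin c → Pt n) (Lr : Fin r → Pt n)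
    (f : PersHom (freeModFin Lc) (freeModFin Lr)) (g : PersHom (freeModFin Lr) M),
    (∀ x, Function.Surjective (g.app x)) ∧
    (∀ x, LinearMap.range (f.app x) = LinearMap.ker (g.app x))

/-- A resolution of `M` of length `len`:
an exact sequence `0 → P_len → ⋯ → P_0 → M → 0` (encoded with `P j = 0` for `j > len`). -/
structure Res (M : PersMod k n) where
  len : ℕ
  P : ℕ → PersMod k n
  d : ∀ j : ℕ, PersHom (P (j + 1)) (P j)
  aug : PersHom (P 0) M
  aug_surj : ∀ r, Function.Surjective (aug.app r)
  exact_zero : ∀ r, LinearMap.range ((d 0).app r) = LinearMap.ker (aug.app r)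
  exact_succ : ∀ (j : ℕ) (r), LinearMap.range ((d (j + 1)).app r) = LinearMap.ker ((d j).app r)
  vanish : ∀ j, len < j → ∀ r, ∀ x : (P j).X r, x = 0

/-- Projectivity in the category of persistence modules
(where epimorphisms are the pointwise surjections). -/
def IsProjectiveMod (P : PersMod k n) : Prop :=
  ∀ (A B : PersMod k n) (e : PersHom A B), (∀ r, Function.Surjective (e.app r)) →
    ∀ f : PersHom P B, ∃ g : PersHom P A, ∀ r, (e.app r).comp (g.app r) = f.app r

/-- An `ε`-bijection between two multisets of points of `R^n`. -/
def IsMatching (ε : ℝ) (B C : Multiset (Pt n)) : Prop :=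
  ∃ m : Multiset (Pt n × Pt n),
    m.map Prod.fst = B ∧ m.map Prod.snd = C ∧ ∀ p ∈ m, dist p.1 p.2 ≤ ε

/-- The bottleneck distance between barcodes. -/
def bottleneckDist (B C : Multiset (Pt n)) : ℝ≥0∞ :=
  sInf { e : ℝ≥0∞ | ∃ ε : ℝ, 0 ≤ ε ∧ e = ENNReal.ofReal ε ∧ IsMatching ε B C }

/-- A signed barcode: a pair (positive part, negative part) of barcodes. -/
abbrev SignedBarcode (n : ℕ) := Multiset (Pt n) × Multiset (Pt n)

/-- The bottleneck dissimilarity on signed barcodes. -/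
def dBhat (B C : SignedBarcode n) : ℝ≥0∞ :=
  bottleneckDist (B.1 + C.2) (C.1 + B.2)

/-- Binary direct sum of persistence modules. -/
def PersMod.dsum (M N : PersMod k n) : PersMod k n where
  X r := M.X r × N.X r
  map h := (M.map h).prodMap (N.map h)
  map_id r := by
    apply LinearMap.ext; intro x
    show (M.map (le_refl r) x.1, N.map (le_refl r) x.2) = x
    rw [M.map_id, N.map_id]; rfl
  map_comp {r s t} h₁ h₂ := by
    apply LinearMap.ext; intro x
    show (M.map h₂ (M.map h₁ x.1), N.map h₂ (N.map h₁ x.2))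
        = (M.map (h₁.trans h₂) x.1, N.map (h₁.trans h₂) x.2)
    rw [← M.map_comp h₁ h₂, ← N.map_comp h₁ h₂]; rfl

/-- Finite direct sum of persistence modules. -/
def dsumFin {m : ℕ} (P : Fin m → PersMod k n) : PersMod k n where
  X r := ∀ j, (P j).X r
  map h := LinearMap.pi fun j => ((P j).map h).comp (LinearMap.proj j)
  map_id r := by
    apply LinearMap.ext; intro x; funext j
    show (P j).map (le_refl r) (x j) = x j
    rw [(P j).map_id]; rfl
  map_comp {r s t} h₁ h₂ := by
    apply LinearMap.ext; intro x; funext j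
    show (P j).map h₂ ((P j).map h₁ (x j)) = (P j).map (h₁.trans h₂) (x j)
    rw [← (P j).map_comp h₁ h₂]; rfl

/-- The zero persistence module. -/
def zeroMod : PersMod k n := freeModFin (fun i : Fin 0 => i.elim0)

/-- The Hilbert function of a persistence module. -/
def Hil (M : PersMod k n) (r : Pt n) : ℕ := Module.finrank k (M.X r)

/-- Number of points of `B` (with multiplicity) that are `≤ r`. -/
def countLe (B : Multiset (Pt n)) (r : Pt n) : ℕ := Multiset.card (B.filter (fun i => i ≤ r))

/-- `R` is a free resolution of `M` with barcodes `B j`. -/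
def IsFreeRes {M : PersMod k n} (R : Res M) (B : ℕ → Multiset (Pt n)) : Prop :=
  ∀ j, IsFreeWith (R.P j) (B j)

/-- `R` is a minimal free resolution of `M` with barcodes `B j`: in every homological degree
its term has minimal rank among all free resolutions of `M`. -/
def IsMinFreeRes {M : PersMod k n} (R : Res M) (B : ℕ → Multiset (Pt n)) : Prop :=
  IsFreeRes R B ∧
  ∀ (R' : Res M) (B' : ℕ → Multiset (Pt n)), IsFreeRes R' B' →
    ∀ j, Multiset.card (B j) ≤ Multiset.card (B' j)

/-- Multiset union of the `B j` over even `j ≤ ℓ`. -/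
def evenPart (B : ℕ → Multiset (Pt n)) (ℓ : ℕ) : Multiset (Pt n) :=
  ∑ j ∈ Finset.range (ℓ + 1), if Even j then B j else 0

/-- Multiset union of the `B j` over odd `j ≤ ℓ`. -/
def oddPart (B : ℕ → Multiset (Pt n)) (ℓ : ℕ) : Multiset (Pt n) :=
  ∑ j ∈ Finset.range (ℓ + 1), if ¬ Even j then B j else 0

/-- `S` is the Betti signed barcode of `M`: the pair (even Betti numbers, odd Betti numbers)
coming from a minimal free resolution of `M`. -/
def IsBettiOf (M : PersMod k n) (S : SignedBarcode n) : Prop :=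
  ∃ (R : Res M) (B : ℕ → Multiset (Pt n)), IsMinFreeRes R B ∧
    S = (evenPart B R.len, oddPart B R.len)

/-- `(P, Q)` (with barcodes `BP`, `BQ`) is a minimal Hilbert decomposition of `η`. -/
def IsMinHilbDecomp (η : Pt n → ℤ) (P Q : PersMod k n) (BP BQ : Multiset (Pt n)) : Prop :=
  IsFreeWith P BP ∧ IsFreeWith Q BQ ∧
  (∀ r, η r = (Hil P r : ℤ) - (Hil Q r : ℤ)) ∧
  ∀ x : Pt n, ¬ (x ∈ BP ∧ x ∈ BQ)

/-- The `ℓ¹`-distance on `R^n`. -/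
def l1dist (x y : Pt n) : ℝ := ∑ i, |x i - y i|

/-- The 1-Wasserstein cost of a matching (encoded as a multiset of pairs). -/
def matchCost (m : Multiset (Pt n × Pt n)) : ℝ := (m.map fun p => l1dist p.1 p.2).sum

/-- The 1-Wasserstein distance between barcodes. -/
def wassDist (B C : Multiset (Pt n)) : ℝ≥0∞ :=
  sInf { e : ℝ≥0∞ | ∃ m : Multiset (Pt n × Pt n),
    m.map Prod.fst = B ∧ m.map Prod.snd = C ∧ e = ENNReal.ofReal (matchCost m) }

/-- The signed 1-Wasserstein distance on signed barcodes. -/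
def dW1hat (B C : SignedBarcode n) : ℝ≥0∞ := wassDist (B.1 + C.2) (C.1 + B.2)

/-- The reduction of a signed barcode: cancel common points with multiplicity. -/
def reduceSB (B : SignedBarcode n) : SignedBarcode n := (B.1 - B.2, B.2 - B.1)

/-- The signed barcode `B = ({(0,1)}, ∅)`. -/
def Bsb : SignedBarcode 2 := (({![(0 : ℝ), 1]} : Multiset (Pt 2)), 0)

/-- The signed barcode `D = ({(1,0)}, ∅)`. -/
def Dsb : SignedBarcode 2 := (({![(1 : ℝ), 0]} : Multiset (Pt 2)), 0)

/-- The signed barcode `C_k` of the staircase module `A_k` of Example 4.2. -/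
def Csb (kk : ℕ) : SignedBarcode 2 :=
  (((List.range (kk + 1)).map fun m => ![(m : ℝ) / kk, 1 - (m : ℝ) / kk] : List (Pt 2)),
   ((List.range kk).map fun m => ![((m : ℝ) + 1) / kk, 1 - (m : ℝ) / kk] : List (Pt 2)))

/-! The positive points of `C_k` form a staircase from `(0,1)` to `(1,0)` with step `1/k`, and each
negative point `((m+1)/k, 1-m/k)` is a corner of that staircase, within `1/k` of both adjacent
positive points. Matching every corner with its lower neighbour leaves `(0,1)` to be matched with
`B`; matching it with its left neighbour leaves `(1,0)` to be matched with `D`. But `B` and `D`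
are single points at sup-distance `1`, and `1 > 1/3 + 1/3`. -/

theorem dist_vec_two (a b c d : ℝ) : dist (![a, b] : Pt 2) ![c, d] = max |a - c| |b - d| := by
  refine le_antisymm ((dist_pi_le_iff (by positivity)).mpr fun i => ?_)
    (max_le (by simpa [Real.dist_eq] using dist_le_pi_dist (![a, b] : Pt 2) ![c, d] 0)
      (by simpa [Real.dist_eq] using dist_le_pi_dist (![a, b] : Pt 2) ![c, d] 1))
  fin_cases i <;> simp [Real.dist_eq]

section Matching

variable {ε : ℝ}

theorem isMatching_map {α : Type*} (s : Multiset α) {f g : α → Pt n}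
    (h : ∀ a ∈ s, dist (f a) (g a) ≤ ε) : IsMatching ε (s.map f) (s.map g) :=
  ⟨s.map fun a => (f a, g a), by simp, by simp, by simpa using h⟩

theorem IsMatching.add {B B' C C' : Multiset (Pt n)} (h : IsMatching ε B C)
    (h' : IsMatching ε B' C') : IsMatching ε (B + B') (C + C') := by
  obtain ⟨m, rfl, rfl, hm⟩ := h
  obtain ⟨m', rfl, rfl, hm'⟩ := h'
  exact ⟨m + m', by simp, by simp, fun p hp => (Multiset.mem_add.mp hp).elim (hm p) (hm' p)⟩

theorem isMatching_singleton_iff {x y : Pt n} : IsMatching ε {x} {y} ↔ dist x y ≤ ε := by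
  refine ⟨?_, fun h => ⟨{(x, y)}, rfl, rfl, by simpa using h⟩⟩
  rintro ⟨m, hfst, hsnd, hm⟩
  obtain ⟨p, rfl⟩ := Multiset.card_eq_one.mp (by simpa using congrArg Multiset.card hfst)
  simp only [Multiset.map_singleton, Multiset.singleton_inj] at hfst hsnd
  simpa [← hfst, ← hsnd] using hm

theorem bottleneckDist_le_ofReal {B C : Multiset (Pt n)} (hε : 0 ≤ ε) (h : IsMatching ε B C) :
    bottleneckDist B C ≤ ENNReal.ofReal ε :=
  sInf_le ⟨ε, hε, rfl, h⟩

theorem bottleneckDist_singleton (x y : Pt n) :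
    bottleneckDist {x} {y} = ENNReal.ofReal (dist x y) := by
  refine le_antisymm (bottleneckDist_le_ofReal dist_nonneg (isMatching_singleton_iff.mpr le_rfl))
    (le_sInf ?_)
  rintro _ ⟨ε, -, rfl, h⟩
  exact ENNReal.ofReal_le_ofReal (isMatching_singleton_iff.mp h)

end Matching

-- `Csb` elaborates `List.range` through the list monad into `List ℝ`; these restate it over `ℕ`.
theorem Csb_fst (k : ℕ) :
    (Csb k).1 = (Multiset.range (k + 1)).map fun m : ℕ => ![(m : ℝ) / k, 1 - (m : ℝ) / k] :=
  congrArg _ <| (congrArg _ (List.flatMap_pure_eq_map _ _)).trans (List.map_map ..)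

theorem Csb_snd (k : ℕ) :
    (Csb k).2 = (Multiset.range k).map fun m : ℕ => ![((m : ℝ) + 1) / k, 1 - (m : ℝ) / k] :=
  congrArg _ <| (congrArg _ (List.flatMap_pure_eq_map _ _)).trans (List.map_map ..)

theorem dBhat_Bsb_Csb_le (k : ℕ) : dBhat Bsb (Csb k) ≤ ENNReal.ofReal (1 / k) := by
  have hsplit : (Csb k).1 = {![0, 1]} + (Multiset.range k).map
      fun m : ℕ => ![((m : ℝ) + 1) / k, 1 - ((m : ℝ) + 1) / k] := by
    rw [Csb_fst, Multiset.range, List.range_succ_eq_map]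
    simp [Function.comp_def, Multiset.range]
  refine bottleneckDist_le_ofReal (by positivity) ?_
  rw [Bsb, Csb_snd, hsplit, add_zero]
  refine (isMatching_singleton_iff.mpr (by simp)).add (isMatching_map _ fun m _ => ?_)
  have hstep : 1 - (m : ℝ) / k - (1 - ((m : ℝ) + 1) / k) = 1 / k := by ring
  rw [dist_vec_two, sub_self, abs_zero, hstep, abs_of_nonneg (by positivity)]
  exact max_le (by positivity) le_rfl

theorem dBhat_Csb_Dsb_le {k : ℕ} (hk : 0 < k) : dBhat (Csb k) Dsb ≤ ENNReal.ofReal (1 / k) := by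
  have hsplit : (Csb k).1 = (Multiset.range k).map
      (fun m : ℕ => ![(m : ℝ) / k, 1 - (m : ℝ) / k]) + {![1, 0]} := by
    rw [Csb_fst, Multiset.range_succ, Multiset.map_cons, div_self (by positivity), sub_self,
      add_comm, Multiset.singleton_add]
  refine bottleneckDist_le_ofReal (by positivity) ?_
  rw [Dsb, Csb_snd, hsplit, add_zero, add_comm {![1, 0]}]
  refine (isMatching_map _ fun m _ => ?_).add (isMatching_singleton_iff.mpr (by simp))
  have hstep : (m : ℝ) / k - ((m : ℝ) + 1) / k = -(1 / k) := by ring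
  rw [dist_vec_two, sub_self, abs_zero, hstep, abs_neg, abs_of_nonneg (by positivity)]
  exact max_le le_rfl (by positivity)

theorem dBhat_Bsb_Dsb : dBhat Bsb Dsb = 1 := by
  rw [dBhat, Bsb, Dsb, add_zero, add_zero, bottleneckDist_singleton, dist_vec_two]
  norm_num

/-- **Example 4.2**: the bottleneck dissimilarity `d̂_B` on 2-dimensional signed barcodes
does not satisfy the triangle inequality: `d̂_B(B, C_k) ≤ 1/k` and `d̂_B(C_k, D) ≤ 1/k`
while `d̂_B(B, D) = 1`. -/
theorem dBhat_fails_triangle_inequality :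
    (∀ kk : ℕ, 1 ≤ kk →
      dBhat Bsb (Csb kk) ≤ ENNReal.ofReal (1 / (kk : ℝ)) ∧
      dBhat (Csb kk) Dsb ≤ ENNReal.ofReal (1 / (kk : ℝ)) ∧
      dBhat Bsb Dsb = 1) ∧
    ¬ (∀ X Y Z : SignedBarcode 2, dBhat X Z ≤ dBhat X Y + dBhat Y Z) := by
  refine ⟨fun kk hkk => ⟨dBhat_Bsb_Csb_le kk, dBhat_Csb_Dsb_le hkk, dBhat_Bsb_Dsb⟩, fun htri => ?_⟩
  have h3 : dBhat Bsb Dsb ≤ ENNReal.ofReal (1 / 3) + ENNReal.ofReal (1 / 3) := by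
    simpa using (htri Bsb (Csb 3) Dsb).trans
      (add_le_add (dBhat_Bsb_Csb_le 3) (dBhat_Csb_Dsb_le three_pos))
  rw [dBhat_Bsb_Dsb, ← ENNReal.ofReal_add (by norm_num) (by norm_num)] at h3
  exact absurd h3 (by norm_num)

end
end

section
/- 1-Wasserstein stability of minimal Hilbert decompositions (Theorem 1.5, presentation form). Let M and N be finitely presentable 2-parameter persistence modules admitting presentation matrices P_M and P_N with the same underlying matrix μ ∈ k^{r×c}. Let (P, Q) be a minimal Hilbert decomposition of Hil(M) and (P', Q') a minimal Hilbert decomposition of Hil(N). Then d_{W¹}(ℬ(P) ∪ ℬ(Q'), ℬ(P') ∪ ℬ(Q)) ≤ 2 ∑_{i=1}^{r+c} ‖L(P_M)(i) − L(P_N)(i)‖_1. (Equivalently, since the left-hand side defines an extended pseudodistance on modules, d̂_{W¹}(ĤB(M), ĤB(N)) ≤ 2·d_I¹(M,N), where d_I¹ is the 1-presentation distance, the largest extended pseudodistance bounded above by the infimum of ∑_i ‖L(P_M)(i) − L(P_N)(i)‖_1 over pairs of presentation matrices with the same underlying matrix.) -/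
set_option linter.unusedVariables false
set_option maxHeartbeats 800000

open scoped Classical ENNReal

noncomputable section

variable {k : Type} [Field k] {n : ℕ}

/-- The linear map, at index `x`, underlying the morphism of free modules determined by a
presentation matrix: its `(i,j)` component is `μ i j` times the canonical monomorphism
`F_{Lcol j} → F_{Lrow i}`. -/
def presMap {r c : ℕ} (μ : Matrix (Fin r) (Fin c) k)
    (Lrow : Fin r → Pt 2) (Lcol : Fin c → Pt 2) (x : Pt 2) :
    ((freeModFin Lcol : PersMod k 2).X x) →ₗ[k] ((freeModFin Lrow : PersMod k 2).X x) :=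
  LinearMap.pi fun i => ∑ j : {j : Fin c // Lcol j ≤ x}, μ i.1 j.1 • LinearMap.proj j

/-- The presentation matrix with labels `Lrow`, `Lcol` and underlying matrix `μ`
is a presentation matrix of `M`: `M` is isomorphic to the cokernel of the morphism
`⊕_j F_{Lcol j} → ⊕_i F_{Lrow i}` determined by `μ`. -/
def Presents {r c : ℕ} (μ : Matrix (Fin r) (Fin c) k)
    (Lrow : Fin r → Pt 2) (Lcol : Fin c → Pt 2) (M : PersMod k 2) : Prop :=
  (∀ i j, μ i j ≠ 0 → Lrow i ≤ Lcol j) ∧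
  ∃ g : PersHom (freeModFin Lrow) M,
    (∀ x, Function.Surjective (g.app x)) ∧
    (∀ x, LinearMap.range (presMap μ Lrow Lcol x) = LinearMap.ker (g.app x))

/-!
If `(μ, Lr, Lc)` presents `M`, then `Hil M x = #{i | Lr i ≤ x} - rank {μ_j | Lc j ≤ x}`, so
`Hil M - Hil N` splits into a row part and a column-rank part. The row part is the Hilbert
function of the signed barcode `(rows of M, rows of N)`, matched at cost `∑ ‖LrM i - LrN i‖₁`.
For the column-rank part, move one coordinate of one column label at a time, cutting each move
at the coordinates of the other labels. Across such an elementary move from `a` to `s` the rank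
function changes exactly on a rectangle `[a, s) × [b, w)`, where `w` is the height at which the
moved column becomes dependent on the columns already present (a half-strip if it never does);
its Hilbert function is that of two corners against two corners, matched at cost `2 (s - a)`.

So `Hil M - Hil N = Hil X₊ - Hil X₋` with a matching of `X₊` to `X₋` of cost at most
`∑ rows + 2 ∑ columns`. A finite multiset of points is determined by its Hilbert function, hence
`ℬ(P) + ℬ(Q') + X₋ = ℬ(P') + ℬ(Q) + X₊`, and cancelling `X₋` from the matching
`id + (X₊ → X₋)` with the triangle inequality gives the bound.
-/

section Barcodes

lemma countLe_add (B C : Multiset (Pt n)) (x : Pt n) :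
    countLe (B + C) x = countLe B x + countLe C x := by
  simp only [countLe, Multiset.filter_add, Multiset.card_add]

lemma countLe_cons (a : Pt n) (B : Multiset (Pt n)) (x : Pt n) :
    countLe (a ::ₘ B) x = countLe B x + if a ≤ x then 1 else 0 := by
  by_cases h : a ≤ x <;> simp [countLe, h, add_comm]

lemma countLe_singleton (a x : Pt n) : countLe {a} x = if a ≤ x then 1 else 0 := by
  by_cases h : a ≤ x <;> simp [countLe, Multiset.filter_singleton, h]

lemma countLe_eq_count_of_minimal {B : Multiset (Pt n)} {z : Pt n}
    (hz : ∀ a ∈ B, a ≤ z → a = z) : countLe B z = B.count z := by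
  rw [countLe, Multiset.count_eq_card_filter_eq]
  congr 1
  exact Multiset.filter_congr fun a ha => ⟨fun h => (hz a ha h).symm, fun h => h ▸ le_rfl⟩

theorem eq_of_countLe_eq {B C : Multiset (Pt n)} (h : ∀ x, countLe B x = countLe C x) :
    B = C := by
  induction B using Multiset.strongInductionOn generalizing C with
  | ih B IH =>
  rcases eq_or_ne (B + C) 0 with hBC | hBC
  · rw [add_eq_zero] at hBC
    rw [hBC.1, hBC.2]
  -- a minimal point `z` of `B + C` is counted below `z` only by its own copies
  obtain ⟨z, hz⟩ := Finset.exists_minimal (Multiset.toFinset_nonempty.2 hBC)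
  have hmin : ∀ D ≤ B + C, ∀ a ∈ D, a ≤ z → a = z := fun D hD a ha haz =>
    hz.eq_of_le (Multiset.mem_toFinset.2 (Multiset.mem_of_le hD ha)) haz
  have hcount : B.count z = C.count z := by
    rw [← countLe_eq_count_of_minimal (hmin B (Multiset.le_add_right B C)),
      ← countLe_eq_count_of_minimal (hmin C (Multiset.le_add_left C B)), h]
  have hzB : z ∈ B := by
    rcases Multiset.mem_add.1 (Multiset.mem_toFinset.1 hz.prop) with hzB | hzC
    · exact hzB
    · rwa [← Multiset.count_pos, hcount, Multiset.count_pos]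
  have hzC : z ∈ C := by rwa [← Multiset.count_pos, ← hcount, Multiset.count_pos]
  obtain ⟨B', rfl⟩ := Multiset.exists_cons_of_mem hzB
  obtain ⟨C', rfl⟩ := Multiset.exists_cons_of_mem hzC
  congr 1
  refine IH B' (Multiset.lt_cons_self B' z) fun x => ?_
  have := h x
  rw [countLe_cons, countLe_cons] at this
  omega

lemma card_le_eq_countLe {m : ℕ} (L : Fin m → Pt n) (x : Pt n) :
    Fintype.card {i // L i ≤ x} = countLe (Finset.univ.val.map L) x := by
  rw [Fintype.card_subtype, countLe, Multiset.filter_map, Multiset.card_map,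
    Finset.card_def, Finset.filter_val]
  rfl

lemma l1dist_nonneg (a b : Pt n) : 0 ≤ l1dist a b :=
  Finset.sum_nonneg fun _ _ => abs_nonneg _

lemma l1dist_self (a : Pt n) : l1dist a a = 0 := by
  simp [l1dist]

lemma l1dist_comm (a b : Pt n) : l1dist a b = l1dist b a := by
  simp only [l1dist, abs_sub_comm]

lemma l1dist_triangle (a b c : Pt n) : l1dist a c ≤ l1dist a b + l1dist b c := by
  rw [l1dist, l1dist, l1dist, ← Finset.sum_add_distrib]
  exact Finset.sum_le_sum fun i _ => abs_sub_le _ _ _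

lemma matchCost_add (m m' : Multiset (Pt n × Pt n)) :
    matchCost (m + m') = matchCost m + matchCost m' := by
  simp only [matchCost, Multiset.map_add, Multiset.sum_add]

lemma matchCost_cons (p : Pt n × Pt n) (m : Multiset (Pt n × Pt n)) :
    matchCost (p ::ₘ m) = l1dist p.1 p.2 + matchCost m := by
  simp only [matchCost, Multiset.map_cons, Multiset.sum_cons]

def Matchable (B C : Multiset (Pt n)) (ε : ℝ) : Prop :=
  ∃ m : Multiset (Pt n × Pt n), m.map Prod.fst = B ∧ m.map Prod.snd = C ∧ matchCost m ≤ ε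

namespace Matchable

lemma refl (B : Multiset (Pt n)) : Matchable B B 0 := by
  refine ⟨B.map fun a => (a, a), by simp, by simp, le_of_eq ?_⟩
  simp [matchCost, l1dist_self]

lemma symm {B C : Multiset (Pt n)} {ε : ℝ} (h : Matchable B C ε) : Matchable C B ε := by
  obtain ⟨m, hB, hC, hm⟩ := h
  refine ⟨m.map Prod.swap, by simpa using hC, by simpa using hB, ?_⟩
  simpa [matchCost, Function.comp_def, l1dist_comm] using hm

lemma singleton (a b : Pt n) : Matchable {a} {b} (l1dist a b) :=
  ⟨{(a, b)}, rfl, rfl, by simp [matchCost]⟩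

lemma mono {B C : Multiset (Pt n)} {ε ε' : ℝ} (h : Matchable B C ε) (hε : ε ≤ ε') :
    Matchable B C ε' := by
  obtain ⟨m, hB, hC, hm⟩ := h
  exact ⟨m, hB, hC, hm.trans hε⟩

lemma add {B C B' C' : Multiset (Pt n)} {ε ε' : ℝ} (h : Matchable B C ε)
    (h' : Matchable B' C' ε') : Matchable (B + B') (C + C') (ε + ε') := by
  obtain ⟨m, hB, hC, hm⟩ := h
  obtain ⟨m', hB', hC', hm'⟩ := h'
  refine ⟨m + m', by rw [Multiset.map_add, hB, hB'], by rw [Multiset.map_add, hC, hC'], ?_⟩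
  rw [matchCost_add]
  exact add_le_add hm hm'

/-- A point common to both sides can be cancelled: the pairs `(z, u)` and `(v, z)` of the
matching are replaced by `(v, u)`, which is cheaper by the triangle inequality. -/
lemma of_cons_cons {z : Pt n} {B C : Multiset (Pt n)} {ε : ℝ}
    (h : Matchable (z ::ₘ B) (z ::ₘ C) ε) : Matchable B C ε := by
  obtain ⟨m, hB, hC, hm⟩ := h
  obtain ⟨⟨z', u⟩, hzu, hz' : z' = z⟩ := Multiset.mem_map.1 (hB ▸ Multiset.mem_cons_self z B)
  subst z'
  obtain ⟨m₁, rfl⟩ := Multiset.exists_cons_of_mem hzu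
  simp only [Multiset.map_cons, Multiset.cons_inj_right] at hB hC
  rw [matchCost_cons] at hm
  by_cases huz : u = z
  · subst huz
    rw [Multiset.cons_inj_right] at hC
    exact ⟨m₁, hB, hC, by linarith [l1dist_self u]⟩
  have hz : z ∈ m₁.map Prod.snd :=
    (Multiset.mem_cons.1 (hC ▸ Multiset.mem_cons_self z C)).resolve_left (Ne.symm huz)
  obtain ⟨⟨v, z'⟩, hvz, hz' : z' = z⟩ := Multiset.mem_map.1 hz
  subst z'
  obtain ⟨m₂, rfl⟩ := Multiset.exists_cons_of_mem hvz
  simp only [Multiset.map_cons] at hB hC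
  rw [Multiset.cons_swap, Multiset.cons_inj_right] at hC
  refine ⟨(v, u) ::ₘ m₂, by simpa using hB, by simpa using hC, ?_⟩
  rw [matchCost_cons] at hm ⊢
  linarith [l1dist_triangle v z u, l1dist_comm v z]

lemma of_add_add {B C Z : Multiset (Pt n)} {ε : ℝ} (h : Matchable (B + Z) (C + Z) ε) :
    Matchable B C ε := by
  induction Z using Multiset.induction_on with
  | empty => simpa using h
  | cons z Z ih =>
    rw [Multiset.add_cons, Multiset.add_cons] at h
    exact ih h.of_cons_cons

lemma map_univ {m : ℕ} (L L' : Fin m → Pt n) :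
    Matchable (Finset.univ.val.map L) (Finset.univ.val.map L') (∑ i, l1dist (L i) (L' i)) := by
  refine ⟨Finset.univ.val.map fun i => (L i, L' i), ?_, ?_, ?_⟩ <;>
    simp [matchCost, Function.comp_def, Finset.sum_eq_multiset_sum]

lemma wassDist_le {B C : Multiset (Pt n)} {ε : ℝ} (h : Matchable B C ε) :
    wassDist B C ≤ ENNReal.ofReal ε := by
  obtain ⟨m, hB, hC, hm⟩ := h
  exact (sInf_le (by exact ⟨m, hB, hC, rfl⟩)).trans (ENNReal.ofReal_le_ofReal hm)

end Matchable

def SignedMatchable (f g : Pt n → ℤ) (ε : ℝ) : Prop :=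
  ∃ Xp Xm : Multiset (Pt n),
    (∀ x, f x - g x = countLe Xp x - countLe Xm x) ∧ Matchable Xp Xm ε

namespace SignedMatchable

lemma of_matchable {B C : Multiset (Pt n)} {ε : ℝ} (h : Matchable B C ε) :
    SignedMatchable (fun x => countLe B x) (fun x => countLe C x) ε :=
  ⟨B, C, fun _ => rfl, h⟩

lemma congr_sub {f g f' g' : Pt n → ℤ} {ε : ℝ} (h : SignedMatchable f g ε)
    (hfg : ∀ x, f' x - g' x = f x - g x) : SignedMatchable f' g' ε := by
  obtain ⟨Xp, Xm, hX, hm⟩ := h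
  exact ⟨Xp, Xm, fun x => (hfg x).trans (hX x), hm⟩

lemma refl (f : Pt n → ℤ) : SignedMatchable f f 0 :=
  ⟨0, 0, fun x => by simp, Matchable.refl 0⟩

lemma mono {f g : Pt n → ℤ} {ε ε' : ℝ} (h : SignedMatchable f g ε) (hε : ε ≤ ε') :
    SignedMatchable f g ε' := by
  obtain ⟨Xp, Xm, hX, hm⟩ := h
  exact ⟨Xp, Xm, hX, hm.mono hε⟩

lemma symm {f g : Pt n → ℤ} {ε : ℝ} (h : SignedMatchable f g ε) : SignedMatchable g f ε := by
  obtain ⟨Xp, Xm, hX, hm⟩ := h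
  exact ⟨Xm, Xp, fun x => by linarith [hX x], hm.symm⟩

lemma trans {f g h : Pt n → ℤ} {ε ε' : ℝ} (hfg : SignedMatchable f g ε)
    (hgh : SignedMatchable g h ε') : SignedMatchable f h (ε + ε') := by
  obtain ⟨Xp, Xm, hX, hm⟩ := hfg
  obtain ⟨Yp, Ym, hY, hm'⟩ := hgh
  refine ⟨Xp + Yp, Xm + Ym, fun x => ?_, hm.add hm'⟩
  simp only [countLe_add, Nat.cast_add]
  linarith [hX x, hY x]

lemma sub {f g f' g' : Pt n → ℤ} {ε ε' : ℝ} (h : SignedMatchable f g ε)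
    (h' : SignedMatchable f' g' ε') : SignedMatchable (f - f') (g - g') (ε + ε') := by
  obtain ⟨Xp, Xm, hX, hm⟩ := h
  obtain ⟨Yp, Ym, hY, hm'⟩ := h'
  refine ⟨Xp + Ym, Xm + Yp, fun x => ?_, hm.add hm'.symm⟩
  simp only [Pi.sub_apply, countLe_add, Nat.cast_add]
  linarith [hX x, hY x]

lemma matchable {f g : Pt n → ℤ} {BP BQ BP' BQ' : Multiset (Pt n)} {ε : ℝ}
    (h : SignedMatchable f g ε) (hf : ∀ x, f x = countLe BP x - countLe BQ x)
    (hg : ∀ x, g x = countLe BP' x - countLe BQ' x) : Matchable (BP + BQ') (BP' + BQ) ε := by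
  obtain ⟨Xp, Xm, hX, hm⟩ := h
  have hsum : (BP + BQ') + Xm = (BP' + BQ) + Xp := eq_of_countLe_eq fun x => by
    have := hX x
    rw [hf, hg] at this
    simp only [countLe_add]
    omega
  have := (Matchable.refl (BP' + BQ)).add hm
  rw [zero_add, ← hsum] at this
  exact this.of_add_add

end SignedMatchable

end Barcodes

section HilbertFunction

open Module

lemma finrank_span_insert {K V : Type*} [DivisionRing K] [AddCommGroup V] [Module K V]
    [FiniteDimensional K V] (v : V) (s : Set V) :
    finrank K (Submodule.span K (insert v s))
      = finrank K (Submodule.span K s) + if v ∈ Submodule.span K s then 0 else 1 := by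
  by_cases hv : v ∈ Submodule.span K s
  · rw [Submodule.span_insert_eq_span hv, if_pos hv, add_zero]
  have hv0 : v ≠ 0 := fun h => hv (h ▸ Submodule.zero_mem _)
  have hdisj := (Submodule.disjoint_span_singleton' hv0).2 hv
  have := Submodule.finrank_sup_add_finrank_inf_eq (Submodule.span K s) (K ∙ v)
  rw [hdisj.eq_bot, finrank_bot, finrank_span_singleton hv0, add_zero] at this
  rw [Submodule.span_insert, sup_comm, this, if_neg hv]

variable {r c : ℕ}

def colSpan (μ : Matrix (Fin r) (Fin c) k) (S : Set (Fin c)) : Submodule k (Fin r → k) :=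
  Submodule.span k ((fun j i => μ i j) '' S)

lemma colSpan_mono (μ : Matrix (Fin r) (Fin c) k) {S T : Set (Fin c)} (h : S ⊆ T) :
    colSpan μ S ≤ colSpan μ T :=
  Submodule.span_mono (Set.image_mono h)

def colRank (μ : Matrix (Fin r) (Fin c) k) (L : Fin c → Pt n) (x : Pt n) : ℕ :=
  finrank k (colSpan μ {j | L j ≤ x})

lemma finrank_freeModFin {m : ℕ} (L : Fin m → Pt n) (x : Pt n) :
    finrank k ((freeModFin L : PersMod k n).X x) = countLe (Finset.univ.val.map L) x := by
  rw [← card_le_eq_countLe]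
  exact Module.finrank_fintype_fun_eq_card k

lemma IsFreeWith.hil_eq_countLe {P : PersMod k n} {B : Multiset (Pt n)}
    (hP : IsFreeWith P B) (x : Pt n) : Hil P x = countLe B x := by
  obtain ⟨m, L, rfl, f, g, hgf, hfg⟩ := hP
  rw [Hil, (LinearEquiv.ofLinearMap (f := f.app x) (g := g.app x) (hfg x) (hgf x)).finrank_eq,
    finrank_freeModFin, Fin.univ_val_map]

lemma presMap_apply (μ : Matrix (Fin r) (Fin c) k) (Lr : Fin r → Pt 2) (Lc : Fin c → Pt 2)
    (x : Pt 2) (f : {j // Lc j ≤ x} → k) (i : {i // Lr i ≤ x}) :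
    presMap μ Lr Lc x f i = ∑ j, μ i.1 j.1 * f j := by
  change (∑ j : {j // Lc j ≤ x}, μ i.1 j.1 • LinearMap.proj (R := k) (φ := fun _ => k) j) f = _
  rw [LinearMap.sum_apply]
  rfl

/-- Extending by zero from the rows below `x` embeds the image of `presMap` onto the span of
the columns below `x`: a column labelled below `x` vanishes off the rows below `x`. -/
lemma finrank_range_presMap {μ : Matrix (Fin r) (Fin c) k} {Lr : Fin r → Pt 2}
    {Lc : Fin c → Pt 2} (hμ : ∀ i j, μ i j ≠ 0 → Lr i ≤ Lc j) (x : Pt 2) :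
    finrank k (LinearMap.range (presMap μ Lr Lc x)) = colRank μ Lc x := by
  let σ : (freeModFin Lr : PersMod k 2).X x →ₗ[k] Fin r → k :=
    Function.ExtendByZero.linearMap k Subtype.val
  have hσ : Function.Injective σ := Function.extend_injective Subtype.val_injective (0 : Fin r → k)
  have hcomp : σ ∘ₗ presMap μ Lr Lc x
      = Fintype.linearCombination k fun (j : {j // Lc j ≤ x}) i => μ i j := by
    refine LinearMap.ext fun f => funext fun i => ?_
    -- `erw`: the fibres of `freeModFin` are function spaces only after unfolding it
    erw [Fintype.linearCombination_apply, Finset.sum_apply]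
    change Function.extend Subtype.val (presMap μ Lr Lc x f) 0 i = _
    by_cases hi : Lr i ≤ x
    · erw [Subtype.val_injective.extend_apply (presMap μ Lr Lc x f) 0 ⟨i, hi⟩, presMap_apply]
      exact Finset.sum_congr rfl fun j _ => mul_comm _ _
    · erw [Function.extend_apply' _ _ _ fun ⟨i', hi'⟩ => hi (hi' ▸ i'.2)]
      refine (Finset.sum_eq_zero fun j _ => ?_).symm
      have hμij : μ i j = 0 := by
        by_contra hne
        exact hi ((hμ i j hne).trans j.2)
      simp [hμij]
  have hrange : Submodule.map σ (LinearMap.range (presMap μ Lr Lc x))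
      = Submodule.span k ((fun j i => μ i j) '' {j | Lc j ≤ x}) := by
    refine (LinearMap.range_comp _ _).symm.trans ?_
    erw [hcomp, Fintype.range_linearCombination]
    congr
    ext v
    simp
  rw [colRank, colSpan, ← hrange]
  exact (Submodule.equivMapOfInjective σ hσ _).finrank_eq

lemma Presents.hil_eq {M : PersMod k 2} {μ : Matrix (Fin r) (Fin c) k}
    {Lr : Fin r → Pt 2} {Lc : Fin c → Pt 2} (hP : Presents μ Lr Lc M) (x : Pt 2) :
    (Hil M x : ℤ) = countLe (Finset.univ.val.map Lr) x - colRank μ Lc x := by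
  obtain ⟨hμ, g, hsurj, hker⟩ := hP
  have := LinearMap.finrank_range_add_finrank_ker (g.app x)
  rw [LinearMap.range_eq_top.2 (hsurj x), finrank_top, ← hker x, finrank_range_presMap hμ,
    finrank_freeModFin] at this
  rw [Hil]
  omega

end HilbertFunction

lemma exists_threshold {ι : Type*} [Finite ι] (f : ι → ℝ) {P : Set ι → Prop} (hP : Monotone P)
    (y₀ : ℝ) (h : ∃ y, P {i | f i ≤ y}) :
    ∃ w, y₀ ≤ w ∧ ∀ y, y₀ ≤ y → (P {i | f i ≤ y} ↔ w ≤ y) := by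
  by_cases h₀ : P {i | f i ≤ y₀}
  · exact ⟨y₀, le_rfl, fun y hy => ⟨fun _ => hy, fun hy' => hP (fun i hi => le_trans hi hy') h₀⟩⟩
  -- `P` can only switch on at a value of `f`
  have hval : ∀ y, P {i | f i ≤ y} → ∃ i, f i ≤ y ∧ P {i' | f i' ≤ f i} := by
    intro y hy
    have hne : {i | f i ≤ y}.Nonempty := by
      by_contra hemp
      rw [Set.not_nonempty_iff_eq_empty] at hemp
      exact h₀ (hP (hemp ▸ Set.empty_subset _) hy)
    obtain ⟨i, hi, hmax⟩ := Set.exists_max_image _ f (Set.toFinite _) hne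
    refine ⟨i, hi, ?_⟩
    have hset : {i' | f i' ≤ f i} = {i' | f i' ≤ y} :=
      Set.ext fun i' => ⟨fun (h' : f i' ≤ f i) => h'.trans hi, hmax i'⟩
    rwa [hset]
  obtain ⟨y, hy⟩ := h
  obtain ⟨i₀, hi₀, hmin⟩ := Set.exists_min_image {i | P {i' | f i' ≤ f i}} f (Set.toFinite _)
    (let ⟨i, _, hi⟩ := hval y hy; ⟨i, hi⟩)
  have hP_iff : ∀ y, P {i | f i ≤ y} ↔ f i₀ ≤ y := fun y =>
    ⟨fun hy => let ⟨i, hiy, hi⟩ := hval y hy; (hmin i hi).trans hiy,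
      fun hy => hP (fun i hi => le_trans hi hy) hi₀⟩
  refine ⟨f i₀, ?_, fun y _ => hP_iff y⟩
  by_contra hlt
  exact h₀ ((hP_iff y₀).2 (not_le.1 hlt).le)

section Plane

def mk2 (d : Fin 2) (a b : ℝ) : Pt 2 := fun i => if i = d then a else b

lemma Fin.rev_ne_self_of_two (d : Fin 2) : d.rev ≠ d := by
  fin_cases d <;> decide

lemma le_iff_two (d : Fin 2) {x y : Pt 2} : x ≤ y ↔ x d ≤ y d ∧ x d.rev ≤ y d.rev := by
  refine ⟨fun h => ⟨h d, h d.rev⟩, fun h i => ?_⟩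
  fin_cases d <;> fin_cases i <;> simp_all

lemma mk2_le_iff (d : Fin 2) (a b : ℝ) (x : Pt 2) : mk2 d a b ≤ x ↔ a ≤ x d ∧ b ≤ x d.rev := by
  rw [le_iff_two d]
  fin_cases d <;> simp [mk2]

lemma l1dist_mk2 (d : Fin 2) (a b a' b' : ℝ) :
    l1dist (mk2 d a b) (mk2 d a' b') = |a - a'| + |b - b'| := by
  fin_cases d <;> simp [l1dist, mk2, Fin.sum_univ_two, add_comm]

lemma signedMatchable_strip (d : Fin 2) {a s : ℝ} (b : ℝ) (has : a ≤ s) :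
    SignedMatchable (fun x => if a ≤ x d ∧ x d < s ∧ b ≤ x d.rev then 1 else 0) 0 (s - a) := by
  refine ⟨{mk2 d a b}, {mk2 d s b}, fun x => ?_, ?_⟩
  · simp only [countLe_singleton, mk2_le_iff, Pi.zero_apply, sub_zero]
    grind
  · convert Matchable.singleton _ _ using 1
    rw [l1dist_mk2, sub_self, abs_zero, add_zero, abs_sub_comm, abs_of_nonneg (sub_nonneg.2 has)]

lemma signedMatchable_rectangle (d : Fin 2) {a s b w : ℝ} (has : a ≤ s) (hbw : b ≤ w) :
    SignedMatchable (fun x => if a ≤ x d ∧ x d < s ∧ b ≤ x d.rev ∧ x d.rev < w then 1 else 0) 0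
      (2 * (s - a)) := by
  refine ⟨{mk2 d a b} + {mk2 d s w}, {mk2 d s b} + {mk2 d a w}, fun x => ?_, ?_⟩
  · simp only [countLe_add, countLe_singleton, mk2_le_iff, Pi.zero_apply, sub_zero]
    grind
  · convert (Matchable.singleton _ _).add (Matchable.singleton _ _) using 1
    simp only [l1dist_mk2, sub_self, abs_zero, add_zero, abs_sub_comm a s,
      abs_of_nonneg (sub_nonneg.2 has)]
    ring

end Plane

section ColumnMoves

variable {r c : ℕ} (μ : Matrix (Fin r) (Fin c) k)

def moveTo (L : Fin c → Pt n) (j : Fin c) (d : Fin n) (s : ℝ) : Fin c → Pt n :=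
  Function.update L j (Function.update (L j) d s)

lemma moveTo_apply_self (L : Fin c → Pt n) (j : Fin c) (d : Fin n) (s : ℝ) :
    moveTo L j d s j = Function.update (L j) d s :=
  Function.update_self _ _ _

lemma moveTo_apply_of_ne (L : Fin c → Pt n) {j j' : Fin c} (h : j' ≠ j) (d : Fin n) (s : ℝ) :
    moveTo L j d s j' = L j' :=
  Function.update_of_ne h _ _

lemma moveTo_moveTo (L : Fin c → Pt n) (j : Fin c) (d : Fin n) (t s : ℝ) :
    moveTo (moveTo L j d t) j d s = moveTo L j d s := by
  simp [moveTo]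

lemma moveTo_moveTo_self (L : Fin c → Pt n) (j : Fin c) (d : Fin n) (s : ℝ) :
    moveTo (moveTo L j d s) j d (L j d) = L := by
  simp [moveTo]

lemma colRank_sub_colRank_moveTo (L : Fin c → Pt 2) (j : Fin c) (d : Fin 2) {s : ℝ}
    (hs : L j d ≤ s) (hgap : ∀ j' ≠ j, ¬ (L j d < L j' d ∧ L j' d < s)) (x : Pt 2) :
    (colRank μ L x : ℤ) - colRank μ (moveTo L j d s) x =
      if L j ≤ x ∧ x d < s ∧ (fun i => μ i j) ∉
        colSpan μ ({j' | L j' d.rev ≤ x d.rev} ∩ {j' | j' ≠ j ∧ L j' d ≤ L j d}) then 1 else 0 := by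
  have hmoved : moveTo L j d s j ≤ x ↔ s ≤ x d ∧ L j d.rev ≤ x d.rev := by
    rw [moveTo_apply_self, le_iff_two d, Function.update_self,
      Function.update_of_ne (Fin.rev_ne_self_of_two d)]
  by_cases hx : L j ≤ x ∧ x d < s
  · set T := {j' | L j' d.rev ≤ x d.rev} ∩ {j' | j' ≠ j ∧ L j' d ≤ L j d}
    have hT : {j' | moveTo L j d s j' ≤ x} = T := by
      ext j'
      by_cases hj : j' = j
      · subst hj
        simp [T, hmoved, hx.2.not_ge]
      have hgap' := hgap j' hj
      simp only [T, Set.mem_ofPred_eq, Set.mem_inter_iff, moveTo_apply_of_ne L hj, le_iff_two d]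
      constructor
      · rintro ⟨h1, h2⟩
        exact ⟨h2, hj, not_lt.1 fun hlt => hgap' ⟨hlt, h1.trans_lt hx.2⟩⟩
      · rintro ⟨h2, -, h1⟩
        exact ⟨h1.trans ((le_iff_two d).1 hx.1).1, h2⟩
    have hins : {j' | L j' ≤ x} = insert j T := by
      ext j'
      by_cases hj : j' = j
      · subst hj
        simp [hx.1]
      · rw [Set.mem_insert_iff, or_iff_right hj, ← hT, Set.mem_ofPred_eq, Set.mem_ofPred_eq,
          moveTo_apply_of_ne L hj]
    rw [colRank, colRank, hT, hins, colSpan, Set.image_insert_eq, finrank_span_insert, ← colSpan]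
    split_ifs <;> simp_all
  · have heq : {j' | L j' ≤ x} = {j' | moveTo L j d s j' ≤ x} := by
      ext j'
      by_cases hj : j' = j
      · subst hj
        rw [Set.mem_ofPred_eq, Set.mem_ofPred_eq, hmoved, le_iff_two d]
        exact ⟨fun h => ⟨not_lt.1 fun hlt => hx ⟨(le_iff_two d).2 h, hlt⟩, h.2⟩,
          fun h => ⟨hs.trans h.1, h.2⟩⟩
      · simp [moveTo_apply_of_ne L hj]
    rw [colRank, colRank, heq, sub_self, if_neg fun h => hx ⟨h.1, h.2.1⟩]

lemma signedMatchable_moveTo_of_gap (L : Fin c → Pt 2) (j : Fin c) (d : Fin 2) {s : ℝ}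
    (hs : L j d ≤ s) (hgap : ∀ j' ≠ j, ¬ (L j d < L j' d ∧ L j' d < s)) :
    SignedMatchable (fun x => colRank μ L x) (fun x => colRank μ (moveTo L j d s) x)
      (2 * (s - L j d)) := by
  have hP : Monotone fun S => (fun i => μ i j) ∈ colSpan μ (S ∩ {j' | j' ≠ j ∧ L j' d ≤ L j d}) :=
    fun S S' hS h => colSpan_mono μ (Set.inter_subset_inter_left _ hS) h
  have hdiff := colRank_sub_colRank_moveTo μ L j d hs hgap
  by_cases hdep : ∃ y, (fun i => μ i j) ∈
      colSpan μ ({j' | L j' d.rev ≤ y} ∩ {j' | j' ≠ j ∧ L j' d ≤ L j d})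
  · -- column `j` becomes dependent at height `w`, which cuts the strip down to a rectangle
    obtain ⟨w, hw, hPw⟩ := exists_threshold (fun j' => L j' d.rev) hP (L j d.rev) hdep
    refine (signedMatchable_rectangle d hs hw).congr_sub fun x => ?_
    rw [hdiff, le_iff_two d]
    by_cases hxe : L j d.rev ≤ x d.rev
    · simp only [hPw _ hxe, hxe, not_le, Pi.zero_apply, sub_zero, true_and, and_true]
    · simp [hxe]
  · push Not at hdep
    refine ((signedMatchable_strip d (L j d.rev) hs).congr_sub fun x => ?_).mono (by linarith)
    rw [hdiff, le_iff_two d]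
    simp only [hdep, not_false_eq_true, and_true, Pi.zero_apply, sub_zero]
    split_ifs <;> simp_all

def labelsBetween (L : Fin c → Pt n) (j : Fin c) (d : Fin n) (s : ℝ) : Finset (Fin c) :=
  Finset.univ.filter fun j' => j' ≠ j ∧ L j d < L j' d ∧ L j' d < s

lemma signedMatchable_moveTo_of_le (L : Fin c → Pt 2) (j : Fin c) (d : Fin 2) {s : ℝ}
    (hs : L j d ≤ s) :
    SignedMatchable (fun x => colRank μ L x) (fun x => colRank μ (moveTo L j d s) x)
      (2 * (s - L j d)) := by
  induction hN : (labelsBetween L j d s).card using Nat.strong_induction_on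
    generalizing L s with
  | _ N ih =>
  by_cases hgap : ∀ j' ≠ j, ¬ (L j d < L j' d ∧ L j' d < s)
  · exact signedMatchable_moveTo_of_gap μ L j d hs hgap
  push Not at hgap
  obtain ⟨j₀, hj₀, hlt₀, hlt₀'⟩ := hgap
  have hmem : j₀ ∈ labelsBetween L j d s := by simp [labelsBetween, hj₀, hlt₀, hlt₀']
  have hjt : moveTo L j d (L j₀ d) j d = L j₀ d := by simp [moveTo_apply_self]
  have hcard₁ : (labelsBetween L j d (L j₀ d)).card < N := by
    refine hN ▸ Finset.card_lt_card ((Finset.ssubset_iff_of_subset fun j' hj' => ?_).2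
      ⟨j₀, hmem, by simp [labelsBetween]⟩)
    simp only [labelsBetween, Finset.mem_filter, Finset.mem_univ, true_and] at hj' ⊢
    exact ⟨hj'.1, hj'.2.1, hj'.2.2.trans hlt₀'⟩
  have hcard₂ : (labelsBetween (moveTo L j d (L j₀ d)) j d s).card < N := by
    refine hN ▸ Finset.card_lt_card ((Finset.ssubset_iff_of_subset fun j' hj' => ?_).2
      ⟨j₀, hmem, by simp [labelsBetween, moveTo_apply_of_ne L hj₀, hjt]⟩)
    simp only [labelsBetween, Finset.mem_filter, Finset.mem_univ, true_and, hjt] at hj' ⊢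
    rw [moveTo_apply_of_ne L hj'.1] at hj'
    exact ⟨hj'.1, hlt₀.trans hj'.2.1, hj'.2.2⟩
  have h₁ := ih _ hcard₁ L hlt₀.le rfl
  have h₂ := ih _ hcard₂ (moveTo L j d (L j₀ d)) (s := s) (hjt.symm ▸ hlt₀'.le) rfl
  rw [moveTo_moveTo, hjt] at h₂
  exact (h₁.trans h₂).mono (le_of_eq (by ring))

lemma signedMatchable_moveTo (L : Fin c → Pt 2) (j : Fin c) (d : Fin 2) (s : ℝ) :
    SignedMatchable (fun x => colRank μ L x) (fun x => colRank μ (moveTo L j d s) x)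
      (2 * |L j d - s|) := by
  rcases le_total (L j d) s with hs | hs
  · rw [abs_sub_comm, abs_of_nonneg (sub_nonneg.2 hs)]
    exact signedMatchable_moveTo_of_le μ L j d hs
  · have hjs : moveTo L j d s j d = s := by simp [moveTo_apply_self]
    have := signedMatchable_moveTo_of_le μ (moveTo L j d s) j d (hjs ▸ hs)
    rw [moveTo_moveTo_self, hjs] at this
    rw [abs_of_nonneg (sub_nonneg.2 hs)]
    exact this.symm

lemma signedMatchable_update (L : Fin c → Pt 2) (j : Fin c) (q : Pt 2) :
    SignedMatchable (fun x => colRank μ L x) (fun x => colRank μ (Function.update L j q) x)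
      (2 * l1dist (L j) q) := by
  have hq : moveTo (moveTo L j 0 (q 0)) j 1 (q 1) = Function.update L j q := by
    rw [moveTo, moveTo_apply_self, moveTo, Function.update_idem]
    congr
    funext i
    fin_cases i <;> simp
  have h₁ := signedMatchable_moveTo μ L j 0 (q 0)
  have h₂ := signedMatchable_moveTo μ (moveTo L j 0 (q 0)) j 1 (q 1)
  rw [hq] at h₂
  refine (h₁.trans h₂).mono (le_of_eq ?_)
  simp [moveTo_apply_self, l1dist, Fin.sum_univ_two]
  ring

lemma signedMatchable_colRank (La Lb : Fin c → Pt 2) :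
    SignedMatchable (fun x => colRank μ La x) (fun x => colRank μ Lb x)
      (2 * ∑ j, l1dist (La j) (Lb j)) := by
  suffices ∀ S : Finset (Fin c), SignedMatchable (fun x => colRank μ La x)
      (fun x => colRank μ (S.piecewise Lb La) x) (2 * ∑ j ∈ S, l1dist (La j) (Lb j)) by
    simpa using this Finset.univ
  intro S
  induction S using Finset.induction_on with
  | empty => simpa using SignedMatchable.refl _
  | insert j S hj ih =>
    rw [Finset.piecewise_insert, Finset.sum_insert hj, mul_add, add_comm]
    have := signedMatchable_update μ (S.piecewise Lb La) j (Lb j)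
    rw [Finset.piecewise_eq_of_notMem _ _ _ hj] at this
    exact ih.trans this

end ColumnMoves

theorem hilbert_decomposition_wasserstein_stability_general
    {k : Type} [Field k]
    (M N : PersMod k 2)
    (r c : ℕ) (μ : Matrix (Fin r) (Fin c) k)
    (LrM : Fin r → Pt 2) (LcM : Fin c → Pt 2)
    (LrN : Fin r → Pt 2) (LcN : Fin c → Pt 2)
    (hPM : Presents μ LrM LcM M) (hPN : Presents μ LrN LcN N)
    (P Q P' Q' : PersMod k 2) (BP BQ BP' BQ' : Multiset (Pt 2))
    (hMd : IsMinHilbDecomp (fun x => (Hil M x : ℤ)) P Q BP BQ)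
    (hNd : IsMinHilbDecomp (fun x => (Hil N x : ℤ)) P' Q' BP' BQ') :
    wassDist (BP + BQ') (BP' + BQ)
      ≤ ENNReal.ofReal
          (2 * ((∑ i, l1dist (LrM i) (LrN i)) + ∑ j, l1dist (LcM j) (LcN j))) := by
  obtain ⟨hP, hQ, hMPQ, -⟩ := hMd
  obtain ⟨hP', hQ', hNPQ, -⟩ := hNd
  have hHil : SignedMatchable (fun x => Hil M x) (fun x => Hil N x)
      ((∑ i, l1dist (LrM i) (LrN i)) + 2 * ∑ j, l1dist (LcM j) (LcN j)) :=
    ((SignedMatchable.of_matchable (Matchable.map_univ LrM LrN)).sub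
      (signedMatchable_colRank μ LcM LcN)).congr_sub fun x => by
        simp only [Pi.sub_apply, hPM.hil_eq, hPN.hil_eq]
  have hmatch := hHil.matchable
    (fun x => (hMPQ x).trans <| by rw [hP.hil_eq_countLe, hQ.hil_eq_countLe])
    (fun x => (hNPQ x).trans <| by rw [hP'.hil_eq_countLe, hQ'.hil_eq_countLe])
  refine hmatch.wassDist_le.trans (ENNReal.ofReal_le_ofReal ?_)
  linarith [Finset.sum_nonneg fun i (_ : i ∈ Finset.univ) => l1dist_nonneg (LrM i) (LrN i)]

/-- **Theorem 1.5** (1-Wasserstein stability of minimal Hilbert decompositions,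
presentation form). If `M` and `N` admit presentation matrices with the same underlying
matrix `μ`, then for minimal Hilbert decompositions `(P, Q)` of `Hil(M)` and `(P', Q')` of
`Hil(N)` one has
`d_{W¹}(ℬ(P) ∪ ℬ(Q'), ℬ(P') ∪ ℬ(Q)) ≤ 2 ∑_i ‖L(P_M)(i) − L(P_N)(i)‖₁`. -/
theorem hilbert_decomposition_wasserstein_stability
    {k : Type} [Field k]
    (M N : PersMod k 2) (hM : FinitelyPresentable M) (hN : FinitelyPresentable N)
    (r c : ℕ) (μ : Matrix (Fin r) (Fin c) k)
    (LrM : Fin r → Pt 2) (LcM : Fin c → Pt 2)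
    (LrN : Fin r → Pt 2) (LcN : Fin c → Pt 2)
    (hPM : Presents μ LrM LcM M) (hPN : Presents μ LrN LcN N)
    (P Q P' Q' : PersMod k 2) (BP BQ BP' BQ' : Multiset (Pt 2))
    (hMd : IsMinHilbDecomp (fun x => (Hil M x : ℤ)) P Q BP BQ)
    (hNd : IsMinHilbDecomp (fun x => (Hil N x : ℤ)) P' Q' BP' BQ') :
    wassDist (BP + BQ') (BP' + BQ)
      ≤ ENNReal.ofReal
          (2 * ((∑ i, l1dist (LrM i) (LrN i)) + ∑ j, l1dist (LcM j) (LcN j))) :=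
  hilbert_decomposition_wasserstein_stability_general M N r c μ LrM LcM LrN LcN hPM hPN P Q P' Q' BP
    BQ BP' BQ' hMd hNd

end
end
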